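/- Let λ > 0, let X ∈ ℝ^{V×D} have strictly positive entries, let W^{(n)} ∈ ℝ^{V×K} have strictly positive entries with every column in Δ_{V−1}, and let H^{(n)} ∈ ℝ^{K×D} have strictly positive entries. Define the updates w^{(n+1)}_{vk} = (w^{(n)}_{vk} Σ_d x_{vd} h^{(n)}_{kd}/(W^{(n)}H^{(n)})_{vd}) / (Σ_{v′} w^{(n)}_{v′k} Σ_d x_{v′d} h^{(n)}_{kd}/(W^{(n)}H^{(n)})_{v′d}) and h^{(n+1)}_{kd} = (1/(1+λ)) · h^{(n)}_{kd} Σ_v x_{vd} w^{(n)}_{vk}/(W^{(n)}H^{(n)})_{vd}. Then every column of W^{(n+1)} lies in Δ_{V−1} and D_KL(X‖W^{(n+1)}H^{(n+1)}) + λ Σ_{k,d} h^{(n+1)}_{kd} ≤ D_KL(X‖W^{(n)}H^{(n)}) + λ Σ_{k,d} h^{(n)}_{kd}. -/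

import Mathlib

/-- Matrix product `(WH)_{vd} = ∑ k, w_{vk} h_{kd}`. -/
noncomputable def matMul {V K D : ℕ} (W : Fin V → Fin K → ℝ) (H : Fin K → Fin D → ℝ) :
    Fin V → Fin D → ℝ := fun v d => ∑ k, W v k * H k d

/-- Generalized Kullback--Leibler divergence (real-valued; used here for strictly
positive matrices). -/
noncomputable def klDiv {V D : ℕ} (X Y : Fin V → Fin D → ℝ) : ℝ :=
  ∑ v, ∑ d, (X v d * Real.log (X v d / Y v d) - X v d + Y v d)

/-! The updates are one step of EM/majorization-minimization. With the responsibilities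
`p_vdk = w_vk h_kd / (WH)_vd`, concavity of `log` bounds `D_KL(X‖W'H') - D_KL(X‖WH)` by
`Σ (W'H') - Σ (WH) - Σ_vk A_vk log (w'_vk / w_vk) - Σ_kd B_kd log (h'_kd / h_kd)`, where
`A_vk = Σ_d x_vd p_vdk` and `B_kd = Σ_v x_vd p_vdk`. When `W` and `W'` have columns summing
to one, `Σ (W'H') = Σ H'`, and the bound separates in `W'` and `H'`. The updates are
`W' ∝ A` column by column and `H' = B / (1 + λ)`, and the inequality `p - q ≤ p log (p / q)`
shows that each separated term is then at most zero once the penalty is included. -/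

open Finset Real

lemma sub_le_mul_log_div {a b : ℝ} (ha : 0 < a) (hb : 0 < b) : a - b ≤ a * log (a / b) := by
  have h := one_sub_inv_le_log_of_pos (div_pos ha hb)
  rw [inv_div] at h
  calc a - b = a * (1 - b / a) := by field_simp
    _ ≤ a * log (a / b) := mul_le_mul_of_nonneg_left h ha.le

lemma sum_sub_sum_le_sum_mul_log_div {ι : Type*} {s : Finset ι} {p q : ι → ℝ}
    (hp : ∀ i ∈ s, 0 < p i) (hq : ∀ i ∈ s, 0 < q i) :
    ∑ i ∈ s, p i - ∑ i ∈ s, q i ≤ ∑ i ∈ s, p i * log (p i / q i) := by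
  rw [← sum_sub_distrib]
  exact sum_le_sum fun i hi => sub_le_mul_log_div (hp i hi) (hq i hi)

lemma mul_sub_le_sum_mul_log_div {ι : Type*} {s : Finset ι} {c : ℝ} {a p q : ι → ℝ}
    (hc : 0 ≤ c) (ha : ∀ i ∈ s, a i = c * p i) (hp : ∀ i ∈ s, 0 < p i)
    (hq : ∀ i ∈ s, 0 < q i) :
    c * (∑ i ∈ s, p i - ∑ i ∈ s, q i) ≤ ∑ i ∈ s, a i * log (p i / q i) :=
  calc c * (∑ i ∈ s, p i - ∑ i ∈ s, q i) ≤ c * ∑ i ∈ s, p i * log (p i / q i) :=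
        mul_le_mul_of_nonneg_left (sum_sub_sum_le_sum_mul_log_div hp hq) hc
    _ = ∑ i ∈ s, a i * log (p i / q i) := by
        rw [mul_sum]; exact sum_congr rfl fun i hi => by rw [ha i hi, mul_assoc]

lemma sum_div_mul_log_div_le_log_sum_div {ι : Type*} [Fintype ι] [Nonempty ι] {a b : ι → ℝ}
    (ha : ∀ i, 0 < a i) (hb : ∀ i, 0 < b i) :
    ∑ i, a i / (∑ j, a j) * log (b i / a i) ≤ log ((∑ i, b i) / ∑ i, a i) := by
  have hA : 0 < ∑ j, a j := sum_pos (fun i _ => ha i) univ_nonempty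
  have jensen := strictConcaveOn_log_Ioi.concaveOn.le_map_sum (t := univ)
    (w := fun i => a i / ∑ j, a j) (p := fun i => b i / a i)
    (fun i _ => (div_pos (ha i) hA).le) (by rw [← sum_div, div_self hA.ne'])
    (fun i _ => div_pos (hb i) (ha i))
  have hmean : ∑ i, a i / (∑ j, a j) * (b i / a i) = (∑ i, b i) / ∑ i, a i := by
    rw [sum_div]
    exact sum_congr rfl fun i _ => by field_simp [(ha i).ne']
  simpa only [smul_eq_mul, hmean] using jensen

lemma mul_log_div_sum_sub_le {ι : Type*} [Fintype ι] [Nonempty ι] {x : ℝ} (hx : 0 ≤ x)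
    {a b : ι → ℝ} (ha : ∀ i, 0 < a i) (hb : ∀ i, 0 < b i) :
    x * log (x / ∑ i, b i) - x * log (x / ∑ i, a i)
      ≤ -∑ i, x * (a i / ∑ j, a j) * log (b i / a i) := by
  rcases hx.eq_or_lt with rfl | hx
  · simp
  have hA : 0 < ∑ j, a j := sum_pos (fun i _ => ha i) univ_nonempty
  have hB : 0 < ∑ j, b j := sum_pos (fun i _ => hb i) univ_nonempty
  have logsum := mul_le_mul_of_nonneg_left (sum_div_mul_log_div_le_log_sum_div ha hb) hx.le
  rw [log_div hB.ne' hA.ne', mul_sum] at logsum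
  simp only [mul_assoc] at logsum ⊢
  rw [log_div hx.ne' hB.ne', log_div hx.ne' hA.ne']
  linarith

section

variable {V K D : ℕ}

lemma matMul_pos [Nonempty (Fin K)] {W : Fin V → Fin K → ℝ} {H : Fin K → Fin D → ℝ}
    (hW : ∀ v k, 0 < W v k) (hH : ∀ k d, 0 < H k d) (v : Fin V) (d : Fin D) :
    0 < matMul W H v d :=
  sum_pos (fun k _ => mul_pos (hW v k) (hH k d)) univ_nonempty

lemma sum_sum_matMul_of_sum_eq_one {W : Fin V → Fin K → ℝ} (H : Fin K → Fin D → ℝ)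
    (hW : ∀ k, ∑ v, W v k = 1) :
    ∑ v, ∑ d, matMul W H v d = ∑ k, ∑ d, H k d := by
  simp only [matMul]
  rw [sum_comm]
  simp_rw [sum_comm (γ := Fin V), ← sum_mul, hW, one_mul]
  rw [sum_comm]

variable (lam : ℝ) (X : Fin V → Fin D → ℝ) (W : Fin V → Fin K → ℝ) (H : Fin K → Fin D → ℝ)

/-- `A_vk = Σ_d x_vd p_vdk` with the responsibilities `p_vdk = w_vk h_kd / (WH)_vd`. -/
noncomputable def emCountW (v : Fin V) (k : Fin K) : ℝ :=
  W v k * ∑ d, X v d * H k d / matMul W H v d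

/-- `B_kd = Σ_v x_vd p_vdk` with the responsibilities `p_vdk = w_vk h_kd / (WH)_vd`. -/
noncomputable def emCountH (k : Fin K) (d : Fin D) : ℝ :=
  H k d * ∑ v, X v d * W v k / matMul W H v d

noncomputable def updateW (v : Fin V) (k : Fin K) : ℝ :=
  emCountW X W H v k / ∑ v', emCountW X W H v' k

noncomputable def updateH (k : Fin K) (d : Fin D) : ℝ :=
  1 / (1 + lam) * emCountH X W H k d

noncomputable def penalizedObjective : ℝ :=
  klDiv X (matMul W H) + lam * ∑ k, ∑ d, H k d

variable {X W H}

lemma emCountW_pos [Nonempty (Fin K)] [Nonempty (Fin D)] (hX : ∀ v d, 0 < X v d)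
    (hW : ∀ v k, 0 < W v k) (hH : ∀ k d, 0 < H k d) (v : Fin V) (k : Fin K) :
    0 < emCountW X W H v k :=
  mul_pos (hW v k) (sum_pos (fun d _ =>
    div_pos (mul_pos (hX v d) (hH k d)) (matMul_pos hW hH v d)) univ_nonempty)

lemma emCountH_pos [Nonempty (Fin K)] [Nonempty (Fin V)] (hX : ∀ v d, 0 < X v d)
    (hW : ∀ v k, 0 < W v k) (hH : ∀ k d, 0 < H k d) (k : Fin K) (d : Fin D) :
    0 < emCountH X W H k d :=
  mul_pos (hH k d) (sum_pos (fun v _ =>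
    div_pos (mul_pos (hX v d) (hW v k)) (matMul_pos hW hH v d)) univ_nonempty)

lemma sum_emCountW_pos [Nonempty (Fin K)] [Nonempty (Fin V)] [Nonempty (Fin D)]
    (hX : ∀ v d, 0 < X v d) (hW : ∀ v k, 0 < W v k) (hH : ∀ k d, 0 < H k d) (k : Fin K) :
    0 < ∑ v, emCountW X W H v k :=
  sum_pos (fun v _ => emCountW_pos hX hW hH v k) univ_nonempty

lemma updateW_pos [Nonempty (Fin K)] [Nonempty (Fin V)] [Nonempty (Fin D)]
    (hX : ∀ v d, 0 < X v d) (hW : ∀ v k, 0 < W v k) (hH : ∀ k d, 0 < H k d)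
    (v : Fin V) (k : Fin K) : 0 < updateW X W H v k :=
  div_pos (emCountW_pos hX hW hH v k) (sum_emCountW_pos hX hW hH k)

lemma sum_updateW_eq_one [Nonempty (Fin K)] [Nonempty (Fin V)] [Nonempty (Fin D)]
    (hX : ∀ v d, 0 < X v d) (hW : ∀ v k, 0 < W v k) (hH : ∀ k d, 0 < H k d) (k : Fin K) :
    ∑ v, updateW X W H v k = 1 := by
  simp only [updateW]
  rw [← sum_div, div_self (sum_emCountW_pos hX hW hH k).ne']

lemma emCountW_eq_mul_updateW [Nonempty (Fin K)] [Nonempty (Fin V)] [Nonempty (Fin D)]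
    (hX : ∀ v d, 0 < X v d) (hW : ∀ v k, 0 < W v k) (hH : ∀ k d, 0 < H k d)
    (v : Fin V) (k : Fin K) :
    emCountW X W H v k = (∑ v', emCountW X W H v' k) * updateW X W H v k :=
  (mul_div_cancel₀ _ (sum_emCountW_pos hX hW hH k).ne').symm

lemma emCountH_eq_mul_updateH (hlam : 1 + lam ≠ 0) (k : Fin K) (d : Fin D) :
    emCountH X W H k d = (1 + lam) * updateH lam X W H k d := by
  rw [updateH, one_div, mul_inv_cancel_left₀ hlam]

lemma updateH_pos [Nonempty (Fin K)] [Nonempty (Fin V)] (hlam : -1 < lam)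
    (hX : ∀ v d, 0 < X v d) (hW : ∀ v k, 0 < W v k) (hH : ∀ k d, 0 < H k d)
    (k : Fin K) (d : Fin D) : 0 < updateH lam X W H k d :=
  mul_pos (one_div_pos.2 (by linarith)) (emCountH_pos hX hW hH k d)

lemma sum_sum_sum_resp_mul_log_div_eq {W' : Fin V → Fin K → ℝ} {H' : Fin K → Fin D → ℝ}
    (hW : ∀ v k, 0 < W v k) (hH : ∀ k d, 0 < H k d)
    (hW' : ∀ v k, 0 < W' v k) (hH' : ∀ k d, 0 < H' k d) :
    ∑ v, ∑ d, ∑ k, X v d * (W v k * H k d / matMul W H v d) *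
        log (W' v k * H' k d / (W v k * H k d))
      = ∑ k, ∑ v, emCountW X W H v k * log (W' v k / W v k)
        + ∑ k, ∑ d, emCountH X W H k d * log (H' k d / H k d) := by
  have hsplit : ∀ v k d, log (W' v k * H' k d / (W v k * H k d))
      = log (W' v k / W v k) + log (H' k d / H k d) := fun v k d => by
    rw [mul_div_mul_comm, log_mul (div_pos (hW' v k) (hW v k)).ne'
      (div_pos (hH' k d) (hH k d)).ne']
  simp only [hsplit, mul_add, sum_add_distrib, emCountW, emCountH, sum_mul, mul_sum]
  congr 1
  · conv_lhs => enter [2, v]; rw [sum_comm]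
    conv_lhs => rw [sum_comm]
    exact sum_congr rfl fun k _ => sum_congr rfl fun v _ => sum_congr rfl fun d _ => by ring
  · conv_lhs => rw [sum_comm]; enter [2, d]; rw [sum_comm]
    conv_lhs => rw [sum_comm]
    exact sum_congr rfl fun k _ => sum_congr rfl fun d _ => sum_congr rfl fun v _ => by ring

theorem klDiv_matMul_sub_le [Nonempty (Fin K)] (hX : ∀ v d, 0 ≤ X v d)
    {W' : Fin V → Fin K → ℝ} {H' : Fin K → Fin D → ℝ}
    (hW : ∀ v k, 0 < W v k) (hH : ∀ k d, 0 < H k d)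
    (hW' : ∀ v k, 0 < W' v k) (hH' : ∀ k d, 0 < H' k d) :
    klDiv X (matMul W' H') - klDiv X (matMul W H)
      ≤ (∑ v, ∑ d, matMul W' H' v d) - ∑ v, ∑ d, matMul W H v d
        - (∑ k, ∑ v, emCountW X W H v k * log (W' v k / W v k)
          + ∑ k, ∑ d, emCountH X W H k d * log (H' k d / H k d)) := by
  rw [← sum_sum_sum_resp_mul_log_div_eq hW hH hW' hH']
  simp only [klDiv, ← sum_sub_distrib]
  refine sum_le_sum fun v _ => sum_le_sum fun d _ => ?_
  have := mul_log_div_sum_sub_le (hX v d) (a := fun k => W v k * H k d)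
    (b := fun k => W' v k * H' k d) (fun k => mul_pos (hW v k) (hH k d))
    (fun k => mul_pos (hW' v k) (hH' k d))
  simp only [matMul] at this ⊢
  linarith

theorem penalizedObjective_update_le [Nonempty (Fin K)] [Nonempty (Fin V)] [Nonempty (Fin D)]
    (hlam : -1 < lam) (hX : ∀ v d, 0 < X v d) (hW : ∀ v k, 0 < W v k)
    (hW1 : ∀ k, ∑ v, W v k = 1) (hH : ∀ k d, 0 < H k d) :
    penalizedObjective lam X (updateW X W H) (updateH lam X W H)
      ≤ penalizedObjective lam X W H := by
  have hWn := updateW_pos hX hW hH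
  have hWn1 := sum_updateW_eq_one hX hW hH
  have hHn := updateH_pos lam hlam hX hW hH
  have hc : 0 < 1 + lam := by linarith
  have descent := klDiv_matMul_sub_le (fun v d => (hX v d).le) hW hH hWn hHn
  rw [sum_sum_matMul_of_sum_eq_one _ hWn1, sum_sum_matMul_of_sum_eq_one _ hW1] at descent
  have hWstep : 0 ≤ ∑ k, ∑ v, emCountW X W H v k * log (updateW X W H v k / W v k) :=
    sum_nonneg fun k _ => by
      simpa only [hWn1, hW1, sub_self, mul_zero] using
        mul_sub_le_sum_mul_log_div (s := univ) (p := (updateW X W H · k))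
          (sum_emCountW_pos hX hW hH k).le
          (fun v _ => emCountW_eq_mul_updateW hX hW hH v k)
          (fun v _ => hWn v k) (fun v _ => hW v k)
  have hHstep : (1 + lam) * (∑ k, ∑ d, updateH lam X W H k d - ∑ k, ∑ d, H k d)
      ≤ ∑ k, ∑ d, emCountH X W H k d * log (updateH lam X W H k d / H k d) := by
    rw [← sum_sub_distrib, mul_sum]
    exact sum_le_sum fun k _ => mul_sub_le_sum_mul_log_div hc.le
      (fun d _ => emCountH_eq_mul_updateH lam hc.ne' k d) (fun d _ => hHn k d) (fun d _ => hH k d)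
  simp only [penalizedObjective]
  linarith

end

/-- One step of the joint multiplicative updates for ℓ1-penalized (sparse) NMF with an
ℓ1 normalization constraint on the columns of `W`: the updated `W` has simplex columns
and the penalized objective `D_KL(X‖WH) + λ‖H‖₁` does not increase. -/
theorem joint_mu_sparse_descent {V K D : ℕ} (hD : 0 < D)
    (lam : ℝ) (hlam : 0 < lam)
    (X : Fin V → Fin D → ℝ) (hX : ∀ v d, 0 < X v d)
    (W : Fin V → Fin K → ℝ) (H : Fin K → Fin D → ℝ)
    (hWpos : ∀ v k, 0 < W v k) (hWsum : ∀ k, (∑ v, W v k) = 1)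
    (hHpos : ∀ k d, 0 < H k d) :
    let Wn : Fin V → Fin K → ℝ := fun v k =>
      (W v k * (∑ d, X v d * H k d / matMul W H v d)) /
        (∑ v', W v' k * (∑ d, X v' d * H k d / matMul W H v' d))
    let Hn : Fin K → Fin D → ℝ := fun k d =>
      (1 / (1 + lam)) * (H k d * (∑ v, X v d * W v k / matMul W H v d))
    ((∀ v k, 0 ≤ Wn v k) ∧ (∀ k, (∑ v, Wn v k) = 1)) ∧
    klDiv X (matMul Wn Hn) + lam * (∑ k, ∑ d, Hn k d)
      ≤ klDiv X (matMul W H) + lam * (∑ k, ∑ d, H k d) := by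
  intro Wn Hn
  rcases isEmpty_or_nonempty (Fin K) with hK | hK
  · exact ⟨⟨fun _ k => hK.elim k, fun k => hK.elim k⟩, by simp [matMul, klDiv]⟩
  have : Nonempty (Fin D) := ⟨⟨0, hD⟩⟩
  have : Nonempty (Fin V) := by
    obtain ⟨k⟩ := hK
    obtain ⟨v, -⟩ := exists_ne_zero_of_sum_ne_zero ((hWsum k).symm ▸ one_ne_zero)
    exact ⟨v⟩
  exact ⟨⟨fun v k => (updateW_pos hX hWpos hHpos v k).le, sum_updateW_eq_one hX hWpos hHpos⟩,
    penalizedObjective_update_le lam (by linarith) hX hWpos hWsum hHpos⟩
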